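/- arXiv:1308.6104 — 6 statements merged into one kernel-verified Lean document; each statement's English description precedes it below -/
import Mathlib

section
/- Foster's theorem: Let S be a countable set, P a transition matrix on S, f : S → ℝ a function bounded below, V ⊆ S a finite subset, and ε > 0. Assume (i) for every i ∈ S \ V, the one-step drift satisfies Σ_{j∈S} P(i,j)·f(j) ≤ f(i) − ε, and (ii) for every i ∈ V, Σ_{j∈S} P(i,j)·f(j) < ∞. Then for every initial state i ∈ S, the expected first hitting time E_i[τ_V] of the set V by the Markov chain with transition matrix P is finite. -/
open scoped ENNReal

/-- `avoidProb P V n i` is the probability that the Markov chain with transition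
matrix `P` started at `i` avoids the set `V` at all times `1, …, n`,
i.e. `ℙ_i(τ_V > n)` where `τ_V = inf {n ≥ 1 : Z_n ∈ V}` is the first hitting
time of `V`. -/
noncomputable def avoidProb {S : Type*} (P : S → S → ℝ) (V : Set S) : ℕ → S → ℝ≥0∞
  | 0, _ => 1
  | n + 1, i =>
      ∑' j : S, Set.indicator Vᶜ (fun j => ENNReal.ofReal (P i j) * avoidProb P V n j) j

/-- The expected first hitting time `E_i[τ_V] = ∑_{n ≥ 0} ℙ_i(τ_V > n)` of the set `V`
by the Markov chain with transition matrix `P` started at `i`. -/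
noncomputable def expHittingTime {S : Type*} (P : S → S → ℝ) (V : Set S) (i : S) : ℝ≥0∞ :=
  ∑' n : ℕ, avoidProb P V n i

noncomputable def fosterW {S : Type*} (P : S → S → ℝ) (V : Set S) (g : S → ℝ≥0∞) : ℕ → S → ℝ≥0∞
  | 0, i => g i
  | n + 1, i =>
      ∑' j : S, Set.indicator Vᶜ (fun j => ENNReal.ofReal (P i j) * fosterW P V g n j) j

lemma avoidProb_succ {S : Type*} (P : S → S → ℝ) (V : Set S) (n : ℕ) (i : S) :
    avoidProb P V (n + 1) i
      = ∑' j : ↥Vᶜ, ENNReal.ofReal (P i ↑j) * avoidProb P V n ↑j := by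
  rw [avoidProb]; exact (tsum_subtype Vᶜ _).symm

lemma fosterW_succ {S : Type*} (P : S → S → ℝ) (V : Set S) (g : S → ℝ≥0∞) (n : ℕ) (i : S) :
    fosterW P V g (n + 1) i
      = ∑' j : ↥Vᶜ, ENNReal.ofReal (P i ↑j) * fosterW P V g n ↑j := by
  rw [fosterW]; exact (tsum_subtype Vᶜ _).symm

/-- **Foster's theorem.** If `P` is a transition matrix on a countable set `S`,
`f : S → ℝ` is bounded below, `V ⊆ S` is finite, `ε > 0`, the one-step drift of `f`
is at most `-ε` outside `V`, and the one-step expectation of `f` is finite on `V`,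
then the expected first hitting time of `V` is finite from every initial state. -/
theorem foster {S : Type*} [Countable S]
    (P : S → S → ℝ)
    (hP0 : ∀ i j, 0 ≤ P i j)
    (hP1 : ∀ i, HasSum (P i) 1)
    (f : S → ℝ) (m : ℝ) (hfm : ∀ i, m ≤ f i)
    (V : Set S) (hV : V.Finite)
    (ε : ℝ) (hε : 0 < ε)
    (hdrift : ∀ i ∉ V, Summable (fun j => P i j * f j) ∧
      (∑' j : S, P i j * f j) ≤ f i - ε)
    (hfin : ∀ i ∈ V, Summable (fun j => P i j * f j)) :
    ∀ i : S, expHittingTime P V i < ⊤ := by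
  classical
  set g : S → ℝ := fun j => f j - m with hgdef
  have hg0 : ∀ j, 0 ≤ g j := fun j => sub_nonneg.2 (hfm j)
  set G : S → ℝ≥0∞ := fun j => ENNReal.ofReal (g j) with hGdef
  set ee : ℝ≥0∞ := ENNReal.ofReal ε with heedef
  have hee0 : ee ≠ 0 := by
    simp only [heedef, ne_eq, ENNReal.ofReal_eq_zero, not_le]; exact hε
  -- summability of g-sums
  have hsumg : ∀ i, Summable (fun j => P i j * f j) → Summable (fun j => P i j * g j) := by
    intro i h
    simpa only [hgdef, mul_sub] using h.sub ((hP1 i).summable.mul_right m)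
  -- the ENNReal sum over Vᶜ equals ofReal of the real sum
  have key1 : ∀ i, Summable (fun j => P i j * f j) →
      (∑' j : ↥Vᶜ, ENNReal.ofReal (P i ↑j) * G ↑j)
        = ENNReal.ofReal (∑' j : ↥Vᶜ, P i ↑j * g ↑j) := by
    intro i h
    rw [ENNReal.ofReal_tsum_of_nonneg (fun j => mul_nonneg (hP0 i _) (hg0 _))
      ((hsumg i h).subtype _)]
    exact tsum_congr fun j => (ENNReal.ofReal_mul (hP0 i _)).symm
  -- the real drift bound outside V
  have hreal : ∀ i ∉ V, (∑' j : ↥Vᶜ, P i ↑j * g ↑j) ≤ g i - ε := by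
    intro i hi
    have hsum := (hdrift i hi).1
    have h1 : (∑' j : ↥Vᶜ, P i ↑j * g ↑j) ≤ ∑' j, P i j * g j :=
      Summable.tsum_subtype_le (fun j => P i j * g j) _ (fun j => mul_nonneg (hP0 i j) (hg0 j))
        (hsumg i hsum)
    have h2 : (∑' j, P i j * g j) = (∑' j, P i j * f j) - m := by
      simp only [hgdef, mul_sub]
      rw [Summable.tsum_sub hsum ((hP1 i).summable.mul_right m), tsum_mul_right, (hP1 i).tsum_eq, one_mul]
    have := (hdrift i hi).2
    simp only [hgdef]
    linarith
  -- the ENNReal drift bound outside V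
  have hdriftE : ∀ i ∉ V,
      ee + (∑' j : ↥Vᶜ, ENNReal.ofReal (P i ↑j) * G ↑j) ≤ G i := by
    intro i hi
    rw [key1 i (hdrift i hi).1, heedef,
      ← ENNReal.ofReal_add hε.le (tsum_nonneg fun j => mul_nonneg (hP0 i _) (hg0 _))]
    exact ENNReal.ofReal_le_ofReal (by linarith [hreal i hi])
  -- main induction
  have key : ∀ n : ℕ, ∀ i ∉ V,
      ee * (∑ k ∈ Finset.range n, avoidProb P V k i) + fosterW P V G n i ≤ G i := by
    intro n
    induction n with
    | zero => intro i hi; simp [fosterW]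
    | succ n ih =>
      intro i hi
      calc ee * (∑ k ∈ Finset.range (n + 1), avoidProb P V k i) + fosterW P V G (n + 1) i
          = ee + ((∑' j : ↥Vᶜ, ee * (ENNReal.ofReal (P i ↑j)
              * ∑ k ∈ Finset.range n, avoidProb P V k ↑j))
            + ∑' j : ↥Vᶜ, ENNReal.ofReal (P i ↑j) * fosterW P V G n ↑j) := by
            rw [Finset.sum_range_succ']
            have h0 : avoidProb P V 0 i = 1 := rfl
            simp only [avoidProb_succ, h0, fosterW_succ]
            rw [← Summable.tsum_finsetSum (fun k _ => ENNReal.summable)]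
            simp only [← Finset.mul_sum]
            rw [mul_add, mul_one, ← ENNReal.tsum_mul_left]
            ring
        _ = ee + ∑' j : ↥Vᶜ, ENNReal.ofReal (P i ↑j)
              * (ee * (∑ k ∈ Finset.range n, avoidProb P V k ↑j) + fosterW P V G n ↑j) := by
            rw [← ENNReal.tsum_add]
            congr 1
            exact tsum_congr fun j => by ring
        _ ≤ ee + ∑' j : ↥Vᶜ, ENNReal.ofReal (P i ↑j) * G ↑j := by
            gcongr with j
            exact ih ↑j j.2
        _ ≤ G i := hdriftE i hi
  -- consequence: expHittingTime bound outside V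
  have hE : ∀ i ∉ V, expHittingTime P V i ≤ G i / ee := by
    intro i hi
    rw [ENNReal.le_div_iff_mul_le (Or.inl hee0) (Or.inl ENNReal.ofReal_ne_top)]
    rw [expHittingTime, ENNReal.tsum_eq_iSup_nat, mul_comm, ENNReal.mul_iSup]
    exact iSup_le fun n => le_trans (le_add_right le_rfl) (key n i hi)
  have hGlt : ∀ i, G i / ee < ⊤ := fun i => ENNReal.div_lt_top ENNReal.ofReal_ne_top hee0
  intro i
  by_cases hi : i ∈ V
  · -- one step from i ∈ V
    have hstep : expHittingTime P V i
        = 1 + ∑' j : ↥Vᶜ, ENNReal.ofReal (P i ↑j) * expHittingTime P V ↑j := by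
      rw [expHittingTime, tsum_eq_zero_add' ENNReal.summable]
      congr 1
      simp only [avoidProb_succ]
      rw [ENNReal.tsum_comm]
      exact tsum_congr fun j => ENNReal.tsum_mul_left
    rw [hstep]
    have hsumfin : (∑' j : ↥Vᶜ, ENNReal.ofReal (P i ↑j) * G ↑j) < ⊤ := by
      rw [key1 i (hfin i hi)]
      exact ENNReal.ofReal_lt_top
    have hbound : (∑' j : ↥Vᶜ, ENNReal.ofReal (P i ↑j) * expHittingTime P V ↑j)
        ≤ (∑' j : ↥Vᶜ, ENNReal.ofReal (P i ↑j) * G ↑j) * ee⁻¹ := by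
      rw [← ENNReal.tsum_mul_right]
      refine ENNReal.tsum_le_tsum fun j => ?_
      rw [mul_assoc]
      exact mul_le_mul_right (le_trans (hE ↑j j.2) (by rw [ENNReal.div_eq_inv_mul, mul_comm]))
        _
    refine ENNReal.add_lt_top.2 ⟨ENNReal.one_lt_top, lt_of_le_of_lt hbound ?_⟩
    exact ENNReal.mul_lt_top hsumfin (ENNReal.inv_lt_top.2 (pos_iff_ne_zero.2 hee0))
  · exact lt_of_le_of_lt (hE i hi) (hGlt i)
end

section
/- Transience criterion: Let S be a countable set and P a transition matrix on S. Assume the Markov chain with transition matrix P is semi-irreducible, i.e., it has a unique closed communicating class S₀ and every state of S₀ is accessible from every state of S. Let τ : S → ℕ be a step-size function with positive integer values bounded by T_max, and let (Z̃_n) be the associated embedded chain Z̃_n = Z_{t_n}, t_0 = 0, t_{n+1} = t_n + τ(Z_{t_n}). Suppose there exist a function f : S → ℝ and positive reals ε, c, b such that, setting A = {i ∈ S : f(i) > c}: (i) A ∩ S₀ ≠ ∅ and (S \ A) ∩ S₀ ≠ ∅; (ii) E(f(Z̃_{n+1}) − f(Z̃_n) | Z̃_n = i) ≥ ε for every i ∈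 A; and (iii) for all i, j ∈ S, |f(j) − f(i)| > b implies P(i,j) = 0. Then every state of the chain is transient, i.e., for every i ∈ S, ℙ_i(∃ n ≥ 1, Z_n = i) < 1. -/
/-!
Suppose the chain started at `i₀` returns almost surely. By first-step analysis the set where
`h = ℙ_·(τ_{i₀} < ∞)` equals `1` is closed, so `h = 1` on `S₀` and at every state the drift can
carry the chain to from `S₀`, in particular at states with arbitrarily large `f`.
On the other hand, put `B = Tmax * b`. Above a level `c' ≥ f i₀ + B` one embedded step cannot
reach `i₀`, since a single step changes `f` by at most `b`, and for `θ = min (1/B) (ε/B²)` the drift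
makes `exp (-θ (f - c'))` superharmonic for the embedded chain. Hence `h ≤ exp (-θ (f - c')) < 1`
above `c'`, a contradiction.
-/

open scoped ENNReal Classical

/-- `nStep P n i j` is the `n`-step transition probability of the Markov chain with
one-step transition matrix `P`. -/
noncomputable def nStep {S : Type*} (P : S → S → ℝ) : ℕ → S → S → ℝ
  | 0, i, j => if i = j then 1 else 0
  | n + 1, i, j => ∑' k : S, P i k * nStep P n k j

/-- `j` is accessible from `i` if some `n`-step transition probability from `i`
to `j` is positive (`n ≥ 0`). -/
def Accessible {S : Type*} (P : S → S → ℝ) (i j : S) : Prop :=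
  ∃ n : ℕ, 0 < nStep P n i j

/-- `i` and `j` communicate if each is accessible from the other. -/
def Communicates {S : Type*} (P : S → S → ℝ) (i j : S) : Prop :=
  Accessible P i j ∧ Accessible P j i

/-- The communicating class of `s`: the set of states communicating with `s`. -/
def commClass {S : Type*} (P : S → S → ℝ) (s : S) : Set S :=
  {j | Communicates P s j}

/-- A set is a communicating class if it is the communicating class of some state. -/
def IsCommClass {S : Type*} (P : S → S → ℝ) (C : Set S) : Prop :=
  ∃ s : S, C = commClass P s

/-- A set `C` is closed if `i ∈ C` and `P i j > 0` imply `j ∈ C`. -/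
def IsClosedClass {S : Type*} (P : S → S → ℝ) (C : Set S) : Prop :=
  ∀ i ∈ C, ∀ j, 0 < P i j → j ∈ C

/-- `hitProb P V n i = ℙ_i(τ_V = n)`, the probability that the chain with transition
matrix `P` started at `i` first hits `V` (after time `0`) at time exactly `n`,
where `τ_V = inf {n ≥ 1 : Z_n ∈ V}`. -/
noncomputable def hitProb {S : Type*} (P : S → S → ℝ) (V : Set S) : ℕ → S → ℝ≥0∞
  | 0, _ => 0
  | 1, i => ∑' j : S, Set.indicator V (fun j => ENNReal.ofReal (P i j)) j
  | n + 2, i =>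
      ∑' j : S, Set.indicator Vᶜ (fun j => ENNReal.ofReal (P i j) * hitProb P V (n + 1) j) j

structure IsTransitionMatrix {S : Type*} (P : S → S → ℝ) : Prop where
  nonneg : ∀ i j, 0 ≤ P i j
  hasSum : ∀ i, HasSum (P i) 1

namespace IsTransitionMatrix

variable {S : Type*} {P Q : S → S → ℝ}

theorem le_one (hP : IsTransitionMatrix P) (i j : S) : P i j ≤ 1 :=
  le_hasSum (hP.hasSum i) j fun k _ => hP.nonneg i k

theorem summable_mul (hP : IsTransitionMatrix P) (i : S) {g : S → ℝ} (hg0 : ∀ k, 0 ≤ g k)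
    (hg1 : ∀ k, g k ≤ 1) : Summable fun k => P i k * g k :=
  (hP.hasSum i).summable.of_nonneg_of_le (fun k => mul_nonneg (hP.nonneg i k) (hg0 k))
    fun k => mul_le_of_le_one_right (hP.nonneg i k) (hg1 k)

theorem tsum_ofReal (hP : IsTransitionMatrix P) (i : S) :
    ∑' k, ENNReal.ofReal (P i k) = 1 := by
  rw [← ENNReal.ofReal_tsum_of_nonneg (hP.nonneg i) (hP.hasSum i).summable,
    (hP.hasSum i).tsum_eq, ENNReal.ofReal_one]

theorem tsum_indicator_add_tsum_indicator_compl (hP : IsTransitionMatrix P) (V : Set S)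
    (i : S) :
    ∑' k, V.indicator (fun k => ENNReal.ofReal (P i k)) k +
      ∑' k, Vᶜ.indicator (fun k => ENNReal.ofReal (P i k)) k = 1 := by
  rw [← ENNReal.tsum_add, ← hP.tsum_ofReal i]
  exact tsum_congr fun k => Set.indicator_self_add_compl_apply V _ k

theorem mul (hP : IsTransitionMatrix P) (hQ : IsTransitionMatrix Q) :
    IsTransitionMatrix fun i j => ∑' k, P i k * Q k j := by
  refine ⟨fun i j => tsum_nonneg fun k => mul_nonneg (hP.nonneg i k) (hQ.nonneg k j), fun i => ?_⟩
  set F : S × S → ℝ := fun x => P i x.1 * Q x.1 x.2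
  have hrow : ∀ k, HasSum (fun j => F (k, j)) (P i k) := fun k => by
    simpa using (hQ.hasSum k).mul_left (P i k)
  have hF : Summable F :=
    (summable_prod_of_nonneg fun x => mul_nonneg (hP.nonneg i x.1) (hQ.nonneg x.1 x.2)).2
      ⟨fun k => (hrow k).summable, (hP.hasSum i).summable.congr fun k => (hrow k).tsum_eq.symm⟩
  have hF1 : HasSum (fun x : S × S => F x.swap) 1 := by
    refine ((Equiv.prodComm S S).hasSum_iff (f := F)).2 ?_
    rw [← (hP.hasSum i).tsum_eq, ← tsum_congr fun k => (hrow k).tsum_eq,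
      ← hF.tsum_prod' fun k => (hrow k).summable]
    exact hF.hasSum
  exact hF1.prod_fiberwise fun j => (hF.prod_symm.prod_factor j).hasSum

theorem ofReal_tsum_mul (hP : IsTransitionMatrix P) (hQ : IsTransitionMatrix Q) (i j : S) :
    ENNReal.ofReal (∑' k, P i k * Q k j) =
      ∑' k, ENNReal.ofReal (P i k) * ENNReal.ofReal (Q k j) := by
  rw [ENNReal.ofReal_tsum_of_nonneg (fun k => mul_nonneg (hP.nonneg i k) (hQ.nonneg k j))
    (hP.summable_mul i (fun k => hQ.nonneg k j) fun k => hQ.le_one k j)]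
  exact tsum_congr fun k => ENNReal.ofReal_mul (hP.nonneg i k)

theorem tsum_mul_pos_iff (hP : IsTransitionMatrix P) (hQ : IsTransitionMatrix Q) (i j : S) :
    0 < ∑' k, P i k * Q k j ↔ ∃ k, 0 < P i k ∧ 0 < Q k j := by
  refine ⟨fun h => ?_, fun ⟨k, hPk, hQk⟩ => ?_⟩
  · by_contra! hzero
    refine h.not_ge (tsum_nonpos fun k => ?_)
    rcases (hP.nonneg i k).eq_or_lt with hPk | hPk
    · simp [← hPk]
    · exact mul_nonpos_of_nonneg_of_nonpos hPk.le (hzero k hPk)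
  · exact (hP.summable_mul i (fun l => hQ.nonneg l j) fun l => hQ.le_one l j).tsum_pos
      (fun l => mul_nonneg (hP.nonneg i l) (hQ.nonneg l j)) k (mul_pos hPk hQk)

end IsTransitionMatrix

section nStep

variable {S : Type*} {P : S → S → ℝ}

theorem nStep_zero_pos_iff {i j : S} : 0 < nStep P 0 i j ↔ i = j := by
  by_cases h : i = j <;> simp [nStep, h]

theorem IsTransitionMatrix.nStep (hP : IsTransitionMatrix P) :
    ∀ n, IsTransitionMatrix (_root_.nStep P n)
  | 0 => ⟨fun i j => by simp only [_root_.nStep]; positivity,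
      fun i => by simpa [_root_.nStep, eq_comm] using hasSum_ite_eq i (1 : ℝ)⟩
  | n + 1 => hP.mul (hP.nStep n)

theorem nStep_succ_pos_iff (hP : IsTransitionMatrix P) {n : ℕ} {i j : S} :
    0 < nStep P (n + 1) i j ↔ ∃ k, 0 < P i k ∧ 0 < nStep P n k j :=
  hP.tsum_mul_pos_iff (hP.nStep n) i j

theorem ofReal_nStep_succ (hP : IsTransitionMatrix P) (n : ℕ) (i j : S) :
    ENNReal.ofReal (nStep P (n + 1) i j) =
      ∑' k, ENNReal.ofReal (P i k) * ENNReal.ofReal (nStep P n k j) :=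
  hP.ofReal_tsum_mul (hP.nStep n) i j

theorem IsClosedClass.mem_of_accessible (hP : IsTransitionMatrix P) {C : Set S}
    (hC : IsClosedClass P C) {i j : S} (hi : i ∈ C) (hij : Accessible P i j) : j ∈ C := by
  obtain ⟨n, hn⟩ := hij
  induction n generalizing i with
  | zero => rwa [← nStep_zero_pos_iff.1 hn]
  | succ n ih =>
    obtain ⟨k, hik, hkj⟩ := (nStep_succ_pos_iff hP).1 hn
    exact ih (hC i hi k hik) hkj

theorem abs_sub_le_of_nStep_pos (hP : IsTransitionMatrix P) {f : S → ℝ} {b : ℝ}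
    (hjump : ∀ i j, b < |f j - f i| → P i j = 0) {n : ℕ} {i j : S} (hn : 0 < nStep P n i j) :
    |f j - f i| ≤ n * b := by
  induction n generalizing i with
  | zero => simp [nStep_zero_pos_iff.1 hn]
  | succ n ih =>
    obtain ⟨k, hik, hkj⟩ := (nStep_succ_pos_iff hP).1 hn
    have hstep : |f k - f i| ≤ b := not_lt.1 fun h => hik.ne' (hjump i k h)
    calc |f j - f i| ≤ |f j - f k| + |f k - f i| := abs_sub_le _ _ _
      _ ≤ n * b + b := add_le_add (ih hkj) hstep
      _ = (n + 1 : ℕ) * b := by push_cast; ring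

end nStep

section hitting

variable {S : Type*} {P : S → S → ℝ} {V : Set S}

/-- `hitProbLE P V N i = ℙ_i(τ_V ≤ N)`. -/
noncomputable def hitProbLE (P : S → S → ℝ) (V : Set S) (N : ℕ) (i : S) : ℝ≥0∞ :=
  ∑ n ∈ Finset.range N, hitProb P V (n + 1) i

/-- `hitProbTotal P V i = ℙ_i(τ_V < ∞)`. -/
noncomputable def hitProbTotal (P : S → S → ℝ) (V : Set S) (i : S) : ℝ≥0∞ :=
  ∑' n, hitProb P V n i

theorem hitProb_add_two (n : ℕ) (i : S) :
    hitProb P V (n + 2) i =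
      ∑' k, Vᶜ.indicator (fun k => ENNReal.ofReal (P i k)) k * hitProb P V (n + 1) k := by
  simp only [hitProb, Set.indicator_mul_left]

theorem hitProbLE_mono (i : S) : Monotone fun N => hitProbLE P V N i :=
  fun _ _ h => Finset.sum_le_sum_of_subset (Finset.range_subset_range.2 h)

theorem hitProbLE_succ (N : ℕ) (i : S) :
    hitProbLE P V (N + 1) i = ∑' k, V.indicator (fun k => ENNReal.ofReal (P i k)) k +
      ∑' k, Vᶜ.indicator (fun k => ENNReal.ofReal (P i k)) k * hitProbLE P V N k := by
  rw [hitProbLE, Finset.sum_range_succ', add_comm]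
  simp_rw [hitProb_add_two, ← Summable.tsum_finsetSum fun _ _ => ENNReal.summable, hitProbLE,
    Finset.mul_sum]
  rfl

theorem hitProbTotal_eq_tsum_succ (i : S) :
    hitProbTotal P V i = ∑' n, hitProb P V (n + 1) i := by
  rw [hitProbTotal, tsum_eq_zero_add' ENNReal.summable, hitProb, zero_add]

theorem hitProbTotal_eq_iSup (i : S) : hitProbTotal P V i = ⨆ N, hitProbLE P V N i := by
  rw [hitProbTotal_eq_tsum_succ, ENNReal.tsum_eq_iSup_nat]
  rfl

theorem hitProbTotal_eq (i : S) :
    hitProbTotal P V i = ∑' k, V.indicator (fun k => ENNReal.ofReal (P i k)) k +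
      ∑' k, Vᶜ.indicator (fun k => ENNReal.ofReal (P i k)) k * hitProbTotal P V k := by
  rw [hitProbTotal_eq_tsum_succ, tsum_eq_zero_add' ENNReal.summable]
  simp_rw [hitProb_add_two, ENNReal.tsum_comm (α := ℕ), ENNReal.tsum_mul_left,
    ← hitProbTotal_eq_tsum_succ]
  rfl

theorem hitProbLE_le_one (hP : IsTransitionMatrix P) (N : ℕ) (i : S) : hitProbLE P V N i ≤ 1 := by
  induction N generalizing i with
  | zero => simp [hitProbLE]
  | succ N ih =>
    calc hitProbLE P V (N + 1) i
        ≤ ∑' k, V.indicator (fun k => ENNReal.ofReal (P i k)) k +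
            ∑' k, Vᶜ.indicator (fun k => ENNReal.ofReal (P i k)) k * 1 := by
          rw [hitProbLE_succ]; gcongr with k; exact ih k
      _ = 1 := by simp_rw [mul_one]; exact hP.tsum_indicator_add_tsum_indicator_compl V i

theorem hitProbTotal_le_one (hP : IsTransitionMatrix P) (i : S) : hitProbTotal P V i ≤ 1 := by
  rw [hitProbTotal_eq_iSup]
  exact iSup_le fun N => hitProbLE_le_one hP N i

theorem isClosedClass_setOf_hitProbTotal_eq_one (hP : IsTransitionMatrix P)
    (hV : ∀ v ∈ V, hitProbTotal P V v = 1) : IsClosedClass P {k | hitProbTotal P V k = 1} := by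
  intro j hj k hjk
  by_cases hkV : k ∈ V
  · exact hV k hkV
  by_contra hk
  set a : S → ℝ≥0∞ := fun l => V.indicator (fun l => ENNReal.ofReal (P j l)) l
  set b : S → ℝ≥0∞ := fun l => Vᶜ.indicator (fun l => ENNReal.ofReal (P j l)) l
  have hab : ∑' l, a l + ∑' l, b l = 1 := hP.tsum_indicator_add_tsum_indicator_compl V j
  have hle : ∀ l, b l * hitProbTotal P V l ≤ b l :=
    fun l => mul_le_of_le_one_right' (hitProbTotal_le_one hP l)
  -- the chain steps to `k ∉ V` with positive probability and misses `V` from there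
  have hlt : ∑' l, b l * hitProbTotal P V l < ∑' l, b l := by
    refine ENNReal.tsum_lt_tsum (ne_top_of_le_ne_top ENNReal.one_ne_top ?_) hle (i := k) ?_
    · exact hab ▸ (ENNReal.tsum_le_tsum hle).trans le_add_self
    · rw [show b k = ENNReal.ofReal (P j k) from Set.indicator_of_mem hkV _]
      simpa using ENNReal.mul_lt_mul_right (by simpa using hjk) ENNReal.ofReal_ne_top
        (lt_of_le_of_ne (hitProbTotal_le_one hP k) hk)
  refine lt_irrefl (1 : ℝ≥0∞) ?_
  calc 1 = ∑' l, a l + ∑' l, b l * hitProbTotal P V l := hj.symm.trans (hitProbTotal_eq j)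
    _ < ∑' l, a l + ∑' l, b l :=
      ENNReal.add_lt_add_left (ne_top_of_le_ne_top ENNReal.one_ne_top (hab ▸ le_self_add)) hlt
    _ = 1 := hab

def CannotHitWithin (P : S → S → ℝ) (V : Set S) (m : ℕ) (j : S) : Prop :=
  ∀ n < m, ∀ k, 0 < nStep P n j k → ∀ v ∈ V, P k v = 0

theorem tsum_ofReal_mul_tsum_ofReal_nStep_mul (hP : IsTransitionMatrix P) (m : ℕ) (j : S)
    (g : S → ℝ≥0∞) :
    ∑' k, ENNReal.ofReal (P j k) * ∑' l, ENNReal.ofReal (nStep P m k l) * g l =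
      ∑' l, ENNReal.ofReal (nStep P (m + 1) j l) * g l := by
  simp_rw [ofReal_nStep_succ hP, ← ENNReal.tsum_mul_left, ← ENNReal.tsum_mul_right, mul_assoc]
  exact ENNReal.tsum_comm

theorem hitProbLE_add_of_cannotHitWithin (hP : IsTransitionMatrix P) {m : ℕ} {j : S}
    (h : CannotHitWithin P V m j) (N : ℕ) :
    hitProbLE P V (N + m) j = ∑' k, ENNReal.ofReal (nStep P m j k) * hitProbLE P V N k := by
  induction m generalizing j with
  | zero =>
    simp_rw [nStep, apply_ite ENNReal.ofReal, ENNReal.ofReal_one, ENNReal.ofReal_zero, ite_mul,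
      one_mul, zero_mul, add_zero]
    exact (tsum_ite_eq' j _).symm
  | succ m ih =>
    have hjV : ∀ v ∈ V, P j v = 0 := h 0 m.succ_pos j (nStep_zero_pos_iff.2 rfl)
    have hnext : ∀ k, 0 < P j k → CannotHitWithin P V m k := fun k hjk n hn l hkl =>
      h (n + 1) (by omega) l ((nStep_succ_pos_iff hP).2 ⟨k, hjk, hkl⟩)
    have hin : ∑' k, V.indicator (fun k => ENNReal.ofReal (P j k)) k = 0 :=
      ENNReal.tsum_eq_zero.2 fun k => Set.indicator_apply_eq_zero.2 fun hk => by simp [hjV k hk]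
    rw [← add_assoc, hitProbLE_succ, hin, zero_add, ← tsum_ofReal_mul_tsum_ofReal_nStep_mul hP]
    refine tsum_congr fun k => ?_
    rcases (hP.nonneg j k).eq_or_lt with hjk | hjk
    · simp [← hjk]
    · rw [Set.indicator_of_mem (show k ∈ Vᶜ from fun hkV => hjk.ne' (hjV k hkV)), ih (hnext k hjk)]

theorem hitProbLE_le_of_superharmonic (hP : IsTransitionMatrix P) {D : Set S} {σ : S → ℕ}
    {φ : S → ℝ≥0∞} (hσ : ∀ j ∈ D, 0 < σ j) (hD : ∀ j ∈ D, CannotHitWithin P V (σ j) j)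
    (hφ : ∀ j ∉ D, 1 ≤ φ j)
    (hsuper : ∀ j ∈ D, ∑' k, ENNReal.ofReal (nStep P (σ j) j k) * φ k ≤ φ j) (N : ℕ) (j : S) :
    hitProbLE P V N j ≤ φ j := by
  induction N using Nat.strong_induction_on generalizing j with
  | _ N ih =>
    by_cases hj : j ∈ D
    swap
    · exact (hitProbLE_le_one hP N j).trans (hφ j hj)
    have hblock := hitProbLE_add_of_cannotHitWithin hP (hD j hj)
    by_cases hN : N ≤ σ j
    · calc hitProbLE P V N j ≤ hitProbLE P V (0 + σ j) j := hitProbLE_mono j (by omega)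
        _ = 0 := by rw [hblock]; simp [hitProbLE]
        _ ≤ φ j := zero_le
    · obtain ⟨M, rfl⟩ : ∃ M, N = M + σ j := ⟨N - σ j, by omega⟩
      calc hitProbLE P V (M + σ j) j
          = ∑' k, ENNReal.ofReal (nStep P (σ j) j k) * hitProbLE P V M k := hblock M
        _ ≤ ∑' k, ENNReal.ofReal (nStep P (σ j) j k) * φ k :=
          ENNReal.tsum_le_tsum fun k => by gcongr; exact ih M (by have := hσ j hj; omega) k
        _ ≤ φ j := hsuper j hj

theorem hitProbTotal_le_of_superharmonic (hP : IsTransitionMatrix P) {D : Set S} {σ : S → ℕ}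
    {φ : S → ℝ≥0∞} (hσ : ∀ j ∈ D, 0 < σ j) (hD : ∀ j ∈ D, CannotHitWithin P V (σ j) j)
    (hφ : ∀ j ∉ D, 1 ≤ φ j)
    (hsuper : ∀ j ∈ D, ∑' k, ENNReal.ofReal (nStep P (σ j) j k) * φ k ≤ φ j) (j : S) :
    hitProbTotal P V j ≤ φ j := by
  rw [hitProbTotal_eq_iSup]
  exact iSup_le fun N => hitProbLE_le_of_superharmonic hP hσ hD hφ hsuper N j

end hitting

theorem Real.exp_neg_le_one_sub_add_sq {y : ℝ} (hy : |y| ≤ 1) : Real.exp (-y) ≤ 1 - y + y ^ 2 := by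
  have h := (abs_le.1 (Real.abs_exp_sub_one_sub_id_le (x := -y) (by rwa [abs_neg]))).2
  rw [neg_sq] at h
  linarith

section drift

variable {S : Type*}

theorem exists_pos_lt_of_lt_tsum_mul {q f : S → ℝ} (hq0 : ∀ k, 0 ≤ q k) (hq1 : HasSum q 1)
    (hqf : Summable fun k => q k * f k) {a : ℝ} (h : a < ∑' k, q k * f k) :
    ∃ k, 0 < q k ∧ a < f k := by
  by_contra! hle
  refine h.not_ge ?_
  calc ∑' k, q k * f k ≤ ∑' k, q k * a := hqf.tsum_le_tsum (fun k => ?_) (hq1.summable.mul_right a)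
    _ = a := by rw [tsum_mul_right, hq1.tsum_eq, one_mul]
  rcases (hq0 k).eq_or_lt with hk | hk
  · simp [← hk]
  · exact mul_le_mul_of_nonneg_left (hle k hk) hk.le

-- For `y = θ (f k - x)` we have `|y| ≤ θ B ≤ 1`, so `exp (-y) ≤ 1 - y + θ² B²` termwise; averaging
-- turns the right side into at most `1 - θ ε + θ² B² ≤ 1`.
theorem tsum_ofReal_mul_exp_le {q f : S → ℝ} {x ε B θ : ℝ} (hq0 : ∀ k, 0 ≤ q k)
    (hq1 : HasSum q 1) (hqf : Summable fun k => q k * f k) (hmean : x + ε ≤ ∑' k, q k * f k)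
    (hsupp : ∀ k, 0 < q k → |f k - x| ≤ B) (hθ : 0 ≤ θ) (hθB : θ * B ≤ 1) (hθε : θ * B ^ 2 ≤ ε)
    (a : ℝ) :
    ∑' k, ENNReal.ofReal (q k) * ENNReal.ofReal (Real.exp (-(θ * (f k - a)))) ≤
      ENNReal.ofReal (Real.exp (-(θ * (x - a)))) := by
  set E := Real.exp (-(θ * (x - a)))
  set R : S → ℝ := fun k => E * (q k * (1 + θ ^ 2 * B ^ 2 + θ * x) - θ * (q k * f k))
  have hR : HasSum R (E * (1 * (1 + θ ^ 2 * B ^ 2 + θ * x) - θ * ∑' k, q k * f k)) :=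
    ((hq1.mul_right _).sub (hqf.hasSum.mul_left θ)).mul_left E
  have hterm : ∀ k, q k * Real.exp (-(θ * (f k - a))) ≤ R k := by
    intro k
    rcases (hq0 k).eq_or_lt with hk | hk
    · simp [R, ← hk]
    have hexp : Real.exp (-(θ * (f k - a))) = Real.exp (-(θ * (f k - x))) * E := by
      rw [← Real.exp_add]; ring_nf
    set y := θ * (f k - x)
    have hyB : |y| ≤ θ * B := by
      rw [abs_mul, abs_of_nonneg hθ]; exact mul_le_mul_of_nonneg_left (hsupp k hk) hθ
    have hy2 : y ^ 2 ≤ θ ^ 2 * B ^ 2 := by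
      rw [← mul_pow, ← sq_abs]; exact pow_le_pow_left₀ (abs_nonneg y) hyB 2
    have := Real.exp_neg_le_one_sub_add_sq (hyB.trans hθB)
    rw [hexp]
    calc q k * (Real.exp (-y) * E) ≤ q k * ((1 - y + θ ^ 2 * B ^ 2) * E) := by gcongr; linarith
      _ = R k := by ring
  have hRsum : ∑' k, R k ≤ E := by
    rw [hR.tsum_eq]
    have hE : 0 ≤ E := Real.exp_nonneg _
    nlinarith [mul_le_mul_of_nonneg_left hθε hθ, mul_le_mul_of_nonneg_left hmean hθ]
  have hR0 : ∀ k, 0 ≤ R k :=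
    fun k => (mul_nonneg (hq0 k) (Real.exp_nonneg _)).trans (hterm k)
  calc ∑' k, ENNReal.ofReal (q k) * ENNReal.ofReal (Real.exp (-(θ * (f k - a))))
      = ∑' k, ENNReal.ofReal (q k * Real.exp (-(θ * (f k - a)))) :=
        tsum_congr fun k => (ENNReal.ofReal_mul (hq0 k)).symm
    _ ≤ ∑' k, ENNReal.ofReal (R k) :=
        ENNReal.tsum_le_tsum fun k => ENNReal.ofReal_le_ofReal (hterm k)
    _ = ENNReal.ofReal (∑' k, R k) := (ENNReal.ofReal_tsum_of_nonneg hR0 hR.summable).symm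
    _ ≤ ENNReal.ofReal E := ENNReal.ofReal_le_ofReal hRsum

variable {P : S → S → ℝ} {τ : S → ℕ} {f : S → ℝ} {ε c b : ℝ}

theorem cannotHitWithin_of_add_lt (hP : IsTransitionMatrix P) (hb : 0 ≤ b)
    (hjump : ∀ i j, b < |f j - f i| → P i j = 0) {V : Set S} {m : ℕ} {j : S}
    (h : ∀ v ∈ V, f v + m * b < f j) : CannotHitWithin P V m j := by
  intro n hn k hk v hv
  apply hjump
  have hkj := (abs_le.1 (abs_sub_le_of_nStep_pos hP hjump hk)).1
  have hnm : (n + 1 : ℝ) * b ≤ m * b := mul_le_mul_of_nonneg_right (by exact_mod_cast hn) hb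
  rw [abs_sub_comm]
  exact lt_of_lt_of_le (by linarith [h v hv]) (le_abs_self _)

theorem IsClosedClass.exists_mem_lt_of_drift (hP : IsTransitionMatrix P) {C : Set S}
    (hC : IsClosedClass P C) (hε : 0 < ε)
    (hdrift : ∀ i, c < f i →
      Summable (fun j => nStep P (τ i) i j * f j) ∧ f i + ε ≤ ∑' j, nStep P (τ i) i j * f j)
    {i : S} (hi : i ∈ C) (hfi : c < f i) (M : ℝ) : ∃ j ∈ C, M < f j := by
  have hclimb : ∀ n : ℕ, ∃ j ∈ C, f i + n * (ε / 2) ≤ f j := by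
    intro n
    induction n with
    | zero => exact ⟨i, hi, by simp⟩
    | succ n ih =>
      obtain ⟨j, hjC, hj⟩ := ih
      have hcj : c < f j := hfi.trans_le (le_trans (by simp; positivity) hj)
      obtain ⟨k, hjk, hk⟩ := exists_pos_lt_of_lt_tsum_mul ((hP.nStep _).nonneg j)
        ((hP.nStep _).hasSum j) (hdrift j hcj).1 (a := f j + ε / 2)
        (by linarith [(hdrift j hcj).2])
      exact ⟨k, hC.mem_of_accessible hP hjC ⟨τ j, hjk⟩, by push_cast; linarith⟩
  obtain ⟨n, hn⟩ := exists_nat_gt ((M - f i) / (ε / 2))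
  obtain ⟨j, hjC, hj⟩ := hclimb n
  exact ⟨j, hjC, by linarith [(div_lt_iff₀ (half_pos hε)).1 hn]⟩

theorem hitProbTotal_lt_one_of_drift (hP : IsTransitionMatrix P) {Tmax : ℕ}
    (hτpos : ∀ i, 0 < τ i) (hτbd : ∀ i, τ i ≤ Tmax) (hε : 0 < ε) (hb : 0 < b)
    (hdrift : ∀ i, c < f i →
      Summable (fun j => nStep P (τ i) i j * f j) ∧ f i + ε ≤ ∑' j, nStep P (τ i) i j * f j)
    (hjump : ∀ i j, b < |f j - f i| → P i j = 0) {V : Set S} {M : ℝ} (hV : ∀ v ∈ V, f v ≤ M)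
    {j : S} (hj : max c (M + Tmax * b) < f j) : hitProbTotal P V j < 1 := by
  set B : ℝ := Tmax * b
  have hB : 0 < B := mul_pos (by exact_mod_cast (hτpos j).trans_le (hτbd j)) hb
  have hτB : ∀ i, τ i * b ≤ B := fun i =>
    mul_le_mul_of_nonneg_right (by exact_mod_cast hτbd i) hb.le
  set θ := min (1 / B) (ε / B ^ 2)
  have hθ : 0 < θ := by positivity
  have hθB : θ * B ≤ 1 := by
    calc θ * B ≤ 1 / B * B := by gcongr; exact min_le_left _ _
      _ = 1 := by field_simp
  have hθε : θ * B ^ 2 ≤ ε := by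
    calc θ * B ^ 2 ≤ ε / B ^ 2 * B ^ 2 := by gcongr; exact min_le_right _ _
      _ = ε := by field_simp
  set c' := max c (M + B)
  refine lt_of_le_of_lt (hitProbTotal_le_of_superharmonic hP (D := {k | c' < f k}) (σ := τ)
    (φ := fun k => ENNReal.ofReal (Real.exp (-(θ * (f k - c'))))) (fun i _ => hτpos i)
    (fun i hi => ?_) (fun i hi => ?_) (fun i hi => ?_) j) ?_
  · refine cannotHitWithin_of_add_lt hP hb.le hjump fun v hv => ?_
    linarith [hτB i, hV v hv, le_max_right c (M + B), show c' < f i from hi]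
  · refine ENNReal.one_le_ofReal.2 (Real.one_le_exp ?_)
    nlinarith [show f i ≤ c' from not_lt.1 hi]
  · have hci : c < f i := (le_max_left _ _).trans_lt hi
    exact tsum_ofReal_mul_exp_le ((hP.nStep _).nonneg i) ((hP.nStep _).hasSum i)
      (hdrift i hci).1 (hdrift i hci).2
      (fun k hk => (abs_sub_le_of_nStep_pos hP hjump hk).trans (hτB i)) hθ.le hθB hθε c'
  · rw [ENNReal.ofReal_lt_one, Real.exp_lt_one_iff, neg_neg_iff_pos]
    exact mul_pos hθ (sub_pos.2 hj)

end drift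

theorem transience_criterion_general {S : Type*}
    (P : S → S → ℝ)
    (hP0 : ∀ i j, 0 ≤ P i j)
    (hP1 : ∀ i, HasSum (P i) 1)
    (S₀ : Set S)
    (hS₀acc : ∀ i : S, ∀ j ∈ S₀, Accessible P i j)
    (τ : S → ℕ) (Tmax : ℕ)
    (hτpos : ∀ i, 0 < τ i)
    (hτbd : ∀ i, τ i ≤ Tmax)
    (f : S → ℝ) (ε c b : ℝ)
    (hε : 0 < ε) (hb : 0 < b)
    (hA₁ : ∃ i ∈ S₀, c < f i)
    (hdrift : ∀ i, c < f i →
      Summable (fun j => nStep P (τ i) i j * f j) ∧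
      f i + ε ≤ ∑' j : S, nStep P (τ i) i j * f j)
    (hjump : ∀ i j, b < |f j - f i| → P i j = 0) :
    ∀ i : S, (∑' n : ℕ, hitProb P {i} n i) < 1 := by
  intro i₀
  have hP : IsTransitionMatrix P := ⟨hP0, hP1⟩
  by_contra! hreturn
  have hi₀ : hitProbTotal P {i₀} i₀ = 1 := le_antisymm (hitProbTotal_le_one hP i₀) hreturn
  have hC := isClosedClass_setOf_hitProbTotal_eq_one hP (V := {i₀}) (by simpa using hi₀)
  obtain ⟨i₁, hi₁S₀, hi₁⟩ := hA₁
  have hi₁C := hC.mem_of_accessible hP hi₀ (hS₀acc i₀ i₁ hi₁S₀)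
  obtain ⟨j, hjC, hj⟩ := hC.exists_mem_lt_of_drift hP hε hdrift hi₁C hi₁ (max c (f i₀ + Tmax * b))
  exact (hitProbTotal_lt_one_of_drift hP hτpos hτbd hε hb hdrift hjump
    (fun v hv => (congrArg f (Set.mem_singleton_iff.1 hv)).le) hj).ne hjC

/-- **Transience criterion.** Let `P` be a transition matrix on a countable set `S`
whose Markov chain is semi-irreducible with (unique, closed) communicating class `S₀`
all of whose states are accessible from every state.  Let `τ : S → ℕ` be a step-size
function with positive values bounded by `Tmax` and consider the associated embedded
chain `Z̃_n = Z_{t_n}`, whose transition matrix is `i j ↦ nStep P (τ i) i j`.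
Suppose there are `f : S → ℝ` and positive reals `ε, c, b` such that, with
`A = {i | f i > c}`: (i) both `A` and its complement meet `S₀`; (ii) the embedded
one-step drift of `f` is at least `ε` on `A`; and (iii) `P i j = 0` whenever
`|f j - f i| > b`.  Then every state is transient: the return probability
`ℙ_i(∃ n ≥ 1, Z_n = i) = ∑_{n} ℙ_i(τ_{\{i\}} = n)` is `< 1` for every `i`. -/
theorem transience_criterion {S : Type*} [Countable S]
    (P : S → S → ℝ)
    (hP0 : ∀ i j, 0 ≤ P i j)
    (hP1 : ∀ i, HasSum (P i) 1)
    (S₀ : Set S)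
    (hS₀class : IsCommClass P S₀)
    (hS₀closed : IsClosedClass P S₀)
    (hS₀unique : ∀ C : Set S, IsCommClass P C → IsClosedClass P C → C = S₀)
    (hS₀acc : ∀ i : S, ∀ j ∈ S₀, Accessible P i j)
    (τ : S → ℕ) (Tmax : ℕ)
    (hτpos : ∀ i, 0 < τ i)
    (hτbd : ∀ i, τ i ≤ Tmax)
    (f : S → ℝ) (ε c b : ℝ)
    (hε : 0 < ε) (hc : 0 < c) (hb : 0 < b)
    (hA₁ : ∃ i ∈ S₀, c < f i)
    (hA₂ : ∃ i ∈ S₀, f i ≤ c)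
    (hdrift : ∀ i, c < f i →
      Summable (fun j => nStep P (τ i) i j * f j) ∧
      f i + ε ≤ ∑' j : S, nStep P (τ i) i j * f j)
    (hjump : ∀ i j, b < |f j - f i| → P i j = 0) :
    ∀ i : S, (∑' n : ℕ, hitProb P {i} n i) < 1 :=
  transience_criterion_general P hP0 hP1 S₀ hS₀acc τ Tmax hτpos hτbd f ε c b hε hb hA₁ hdrift hjump
end

section
/- The determinant of the leading principal 3×3 submatrix of U(ε) equals (1/u₄₄)·(3ε + 2c·((1 − ε/c)^{3/2} − 1)). -/
/-- The symmetric 4×4 matrix `U(ε)` with diagonal entries `u i` and off-diagonal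
entries `√(u i · u j · (1 − ε/c))`. -/
noncomputable def Umat (u : Fin 4 → ℝ) (c ε : ℝ) : Matrix (Fin 4) (Fin 4) ℝ :=
  Matrix.of fun i j => if i = j then u i else Real.sqrt (u i * u j * (1 - ε / c))

/-!
With `r = √(1 − ε/c)`, every principal submatrix of `U(ε)` is `D (J_r) D`, where
`D = diag(√uᵢᵢ)` and `J_r` has ones on the diagonal and `r` elsewhere. In size 3,
`det J_r = (1 − r)²(1 + 2r) = 1 − 3r² + 2r³`, and `det D² = u₁₁u₂₂u₃₃ = c / u₄₄`;
substituting `ε = c(1 − r²)` and `(1 − ε/c)^{3/2} = r³` gives the formula.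
-/

open Matrix

theorem det_of_ite_one_fin_three {R : Type*} [CommRing R] (r : R) :
    det (of fun i j : Fin 3 => if i = j then 1 else r) = (1 - r) ^ 2 * (1 + 2 * r) := by
  simp only [det_fin_three, of_apply, Fin.isValue, Fin.reduceEq, ↓reduceIte, mul_one, one_mul]
  ring

theorem of_ite_sqrt_mul_eq_diagonal_mul {n : Type*} [Fintype n] [DecidableEq n] {u : n → ℝ}
    (hu : ∀ i, 0 ≤ u i) (t : ℝ) :
    (of fun i j : n => if i = j then u i else √(u i * u j * t)) =
      diagonal (fun i => √(u i)) * (of fun i j : n => if i = j then 1 else √t) *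
        diagonal (fun i => √(u i)) := by
  ext i j
  rw [mul_diagonal, diagonal_mul, of_apply, of_apply]
  split_ifs with hij
  · subst hij
    rw [mul_one, Real.mul_self_sqrt (hu i)]
  · rw [Real.sqrt_mul (mul_nonneg (hu i) (hu j)), Real.sqrt_mul (hu i)]
    ring

theorem det_of_ite_sqrt_mul {n : Type*} [Fintype n] [DecidableEq n] {u : n → ℝ}
    (hu : ∀ i, 0 ≤ u i) (t : ℝ) :
    det (of fun i j : n => if i = j then u i else √(u i * u j * t)) =
      (∏ i, u i) * det (of fun i j : n => if i = j then 1 else √t) := by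
  rw [of_ite_sqrt_mul_eq_diagonal_mul hu, det_mul, det_mul, det_diagonal,
    mul_right_comm, ← Finset.prod_mul_distrib]
  simp only [Real.mul_self_sqrt (hu _)]

theorem Umat_submatrix {m : ℕ} (u : Fin 4 → ℝ) (c ε : ℝ) {f : Fin m → Fin 4}
    (hf : Function.Injective f) :
    (Umat u c ε).submatrix f f =
      of fun i j => if i = j then u (f i) else √(u (f i) * u (f j) * (1 - ε / c)) := by
  ext i j
  simp only [Umat, submatrix_apply, of_apply, hf.eq_iff]

/-- The determinant of the leading principal 3×3 submatrix of `U(ε)` equals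
`(1/u₄₄) · (3ε + 2c·((1 − ε/c)^{3/2} − 1))`, where `^` is the real power. -/
theorem Umat_det_three (u : Fin 4 → ℝ) (hu : ∀ i, 0 < u i)
    (c ε : ℝ) (hc : c = u 0 * u 1 * u 2 * u 3)
    (hεc : ε ≤ c) :
    Matrix.det
      ((Umat u c ε).submatrix
        (Fin.castLE (show 3 ≤ 4 by norm_num))
        (Fin.castLE (show 3 ≤ 4 by norm_num)))
      = (1 / u 3) * (3 * ε + 2 * c * ((1 - ε / c) ^ ((3 : ℝ) / 2) - 1)) := by
  have hc0 : 0 < c := hc ▸ mul_pos (mul_pos (mul_pos (hu 0) (hu 1)) (hu 2)) (hu 3)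
  have ht : 0 ≤ 1 - ε / c := sub_nonneg.2 ((div_le_one hc0).2 hεc)
  have hε : ε = c * (1 - √(1 - ε / c) ^ 2) := by
    rw [Real.sq_sqrt ht]
    field_simp
    ring
  rw [Umat_submatrix u c ε (Fin.castLE_injective _), det_of_ite_sqrt_mul (fun i => (hu _).le),
    det_of_ite_one_fin_three, Real.rpow_div_two_eq_sqrt _ ht, Real.rpow_ofNat,
    Fin.prod_univ_three]
  simp only [Fin.castLE_zero, Fin.reduceCastLE]
  generalize √(1 - ε / c) = r at hε ⊢
  have hu3 : u 3 ≠ 0 := (hu 3).ne'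
  rw [hε, hc]
  field_simp
  ring
end

section
/- The determinant of U(ε) equals (1/c)·(3ε² + 2c²·(−3·(1 − ε/c)² + 4·(1 − ε/c)^{3/2} − 1)). -/
open Matrix

theorem Matrix.det_scalar_add_vecMulVec {R n : Type*} [CommRing R] [Fintype n] [DecidableEq n]
    (t : R) (u v : n → R) :
    (scalar n t + vecMulVec u v).det
      = t ^ Fintype.card n + (u ⬝ᵥ v) * t ^ (Fintype.card n - 1) := by
  rw [← sub_neg_eq_add, ← neg_vecMulVec, ← eval_charpoly, charpoly_vecMulVec]
  simp [neg_dotProduct]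

theorem Umat_eq_diagonal_mul_mul_diagonal {u : Fin 4 → ℝ} (hu : ∀ i, 0 ≤ u i) (c ε : ℝ) :
    Umat u c ε = diagonal (fun i => √(u i))
      * (scalar (Fin 4) (1 - √(1 - ε / c)) + vecMulVec (fun _ => √(1 - ε / c)) 1)
      * diagonal (fun i => √(u i)) := by
  ext i j
  rcases eq_or_ne i j with rfl | hij
  · simp [Umat, Real.mul_self_sqrt (hu i)]
  · simp only [Umat, of_apply, hij, ↓reduceIte, Real.sqrt_mul (mul_nonneg (hu i) (hu j)),
      Real.sqrt_mul (hu i), scalar_apply, mul_diagonal, diagonal_mul, Matrix.add_apply,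
      diagonal_apply_ne _ hij, vecMulVec_apply, Pi.one_apply, zero_add]
    ring

theorem det_Umat {u : Fin 4 → ℝ} (hu : ∀ i, 0 ≤ u i) (c ε : ℝ) :
    (Umat u c ε).det = (∏ i, u i) * (1 - √(1 - ε / c)) ^ 3 * (1 + 3 * √(1 - ε / c)) := by
  rw [Umat_eq_diagonal_mul_mul_diagonal hu, det_mul, det_mul, det_diagonal,
    det_scalar_add_vecMulVec, mul_right_comm, ← Finset.prod_mul_distrib]
  simp only [Real.mul_self_sqrt (hu _), Fintype.card_fin, dotProduct_one, Finset.sum_const,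
    Finset.card_fin, nsmul_eq_mul]
  ring

theorem Umat_det_general (u : Fin 4 → ℝ) (hu : ∀ i, 0 < u i)
    (c ε : ℝ) (hc : c = u 0 * u 1 * u 2 * u 3)
    (hεc : ε ≤ c) :
    Matrix.det (Umat u c ε)
      = (1 / c) * (3 * ε ^ 2
          + 2 * c ^ 2 * (-3 * (1 - ε / c) ^ 2 + 4 * (1 - ε / c) ^ ((3 : ℝ) / 2) - 1)) := by
  have hprod : ∏ i, u i = c := by rw [Fin.prod_univ_four, hc]
  have hc0 : 0 < c := hprod ▸ Finset.prod_pos fun i _ => hu i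
  have ht : 0 ≤ 1 - ε / c := sub_nonneg.2 ((div_le_one hc0).2 hεc)
  rw [det_Umat (fun i => (hu i).le), hprod, Real.rpow_div_two_eq_sqrt 3 ht, Real.rpow_ofNat]
  set s := √(1 - ε / c)
  have hs : s ^ 2 = 1 - ε / c := Real.sq_sqrt ht
  have hε : ε = c * (1 - s ^ 2) := by
    rw [hs]; field_simp; ring
  rw [← hs, hε]
  field_simp
  ring

/-- The determinant of `U(ε)` equals
`(1/c) · (3ε² + 2c²·(−3(1 − ε/c)² + 4(1 − ε/c)^{3/2} − 1))`, where the exponent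
`3/2` denotes the real power. -/
theorem Umat_det (u : Fin 4 → ℝ) (hu : ∀ i, 0 < u i)
    (c ε : ℝ) (hc : c = u 0 * u 1 * u 2 * u 3)
    (hε0 : 0 ≤ ε) (hεc : ε ≤ c) :
    Matrix.det (Umat u c ε)
      = (1 / c) * (3 * ε ^ 2
          + 2 * c ^ 2 * (-3 * (1 - ε / c) ^ 2 + 4 * (1 - ε / c) ^ ((3 : ℝ) / 2) - 1)) :=
  Umat_det_general u hu c ε hc hεc
end

section
/- For every real t with 0 < t ≤ 1, one has 3t² + 2·(−3·(1 − t)² + 4·(1 − t)^{3/2} − 1) > 0. -/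
/-- For every real `t` with `0 < t ≤ 1`, one has
`3t² + 2·(−3(1 − t)² + 4(1 − t)^{3/2} − 1) > 0`, where the exponent `3/2` denotes
the real power. -/
theorem det_pos (t : ℝ) (ht0 : 0 < t) (ht1 : t ≤ 1) :
    0 < 3 * t ^ 2 + 2 * (-3 * (1 - t) ^ 2 + 4 * (1 - t) ^ ((3 : ℝ) / 2) - 1) := by
  have hu0 : (0:ℝ) ≤ 1 - t := by linarith
  set s := Real.sqrt (1 - t) with hs
  have hsq : s ^ 2 = 1 - t := Real.sq_sqrt hu0
  have hs0 : 0 ≤ s := Real.sqrt_nonneg _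
  have hs1 : s < 1 := by nlinarith
  have hr : (1 - t) ^ ((3 : ℝ) / 2) = s ^ 3 := by
    rw [hs, ← Real.rpow_natCast (Real.sqrt (1-t)) 3, Real.sqrt_eq_rpow, ← Real.rpow_mul hu0]
    norm_num
  rw [hr]
  nlinarith [mul_pos (pow_pos (by linarith : (0:ℝ) < 1 - s) 3)
    (by linarith : (0:ℝ) < 3 * s + 1), sq_nonneg s]
end

section
/- Let λ₁, λ₃, μ₂, μ₄, p be real numbers with 0 < λ₁ < μ₂, 0 ≤ λ₃ < μ₄ and p ≥ 0. Then ((λ₃ + p·μ₂)/(μ₂ − λ₁)) · (λ₁/(μ₄ − λ₃)) < 1 if and only if λ₁/μ₂ + (p·λ₁ + λ₃)/μ₄ < 1. -/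
/-- For exogenous arrival rates `λ₁, λ₃`, priority-class service rates `μ₂, μ₄` and
feedback probability `p` with `0 < λ₁ < μ₂`, `0 ≤ λ₃ < μ₄` and `p ≥ 0`, the spiral
contraction condition `r₁ · r₂ < 1` with `r₁ = (λ₃ + p·μ₂)/(μ₂ − λ₁)` and
`r₂ = λ₁/(μ₄ − λ₃)` is equivalent to the load condition
`λ₁/μ₂ + (p·λ₁ + λ₃)/μ₄ < 1`. -/
theorem priority_stability_iff (lam₁ lam₃ mu₂ mu₄ p : ℝ)
    (h₁ : 0 < lam₁) (h₂ : lam₁ < mu₂) (h₃ : 0 ≤ lam₃) (h₄ : lam₃ < mu₄) (hp : 0 ≤ p) :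
    ((lam₃ + p * mu₂) / (mu₂ - lam₁)) * (lam₁ / (mu₄ - lam₃)) < 1 ↔
    lam₁ / mu₂ + (p * lam₁ + lam₃) / mu₄ < 1 := by
  have hA : 0 < mu₂ - lam₁ := by linarith
  have hB : 0 < mu₄ - lam₃ := by linarith
  have hC : 0 < mu₂ := by linarith
  have hD : 0 < mu₄ := by linarith
  rw [div_mul_div_comm, div_lt_one (by positivity),
      div_add_div _ _ (ne_of_gt hC) (ne_of_gt hD), div_lt_one (by positivity)]
  constructor <;> intro h <;> nlinarith [mul_pos hC hD, mul_pos hA hB]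
end
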